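/- arXiv:1705.06412 — 2 statements merged into one kernel-verified Lean document; each statement's English description precedes it below -/
import Mathlib

section
/- Let n ≥ 1, x ∈ ℝⁿ, j ∈ {1,…,n}, and let a be a random vector in ℝⁿ with i.i.d. N(0,1) entries. Define the random variable X = ‖x‖₂² + 2 x_j² − ⟨a,x⟩² a_j². Then: (i) X ≤ ‖x‖₂² + 2 x_j² ≤ 3‖x‖₂² almost surely; (ii) E[X] = 0; (iii) E[X²] = 20 x_j⁴ + 68 ‖x‖₂² x_j² + 8 ‖x‖₂⁴, and in particular E[X²] ≤ 96 ‖x‖₂⁴. -/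
/-!
Write `⟨a, x⟩ = x_j a_j + u` with `u = ∑_{i ≠ j} a_i x_i`. Under the product measure `u` is
independent of `a_j`, and as a linear functional of a standard Gaussian vector it has law
`N(0, ‖x‖² - x_j²)`. So `E[⟨a, x⟩^m a_j^q]` expands binomially into products of one-dimensional
Gaussian moments, which Gaussian integration by parts gives as `E[t^k] = (k - 1)‼` for even `k`
and `0` for odd `k`. This yields `E[⟨a, x⟩² a_j²] = ‖x‖² + 2 x_j²` and
`E[⟨a, x⟩⁴ a_j⁴] = 24 x_j⁴ + 72 ‖x‖² x_j² + 9 ‖x‖⁴`, and expanding `X` and `X²` finishes the proof.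
-/

open MeasureTheory ProbabilityTheory

/-- The law of a random vector in `ℝⁿ` with i.i.d. standard Gaussian `N(0,1)` entries. -/
noncomputable def stdGaussianVec (n : ℕ) : Measure (Fin n → ℝ) :=
  Measure.pi fun _ => gaussianReal 0 1

open Real Finset
open scoped NNReal

namespace ProbabilityTheory

lemma integrable_pow_mul_exp_neg_sq_div_two (k : ℕ) :
    Integrable fun x : ℝ => x ^ k * exp (-x ^ 2 / 2) := by
  have h := integrable_rpow_mul_exp_neg_mul_sq (b := 1 / 2) one_half_pos (s := k)
    (by linarith [k.cast_nonneg (α := ℝ)])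
  refine h.congr (ae_of_all _ fun x => ?_)
  simp only [rpow_natCast]
  ring_nf

lemma integral_pow_add_two_mul_exp_neg_sq_div_two (k : ℕ) :
    ∫ x : ℝ, x ^ (k + 2) * exp (-x ^ 2 / 2) = (k + 1) * ∫ x : ℝ, x ^ k * exp (-x ^ 2 / 2) := by
  have hu (x : ℝ) : HasDerivAt (fun x => x ^ (k + 1)) ((k + 1) * x ^ k) x := by
    simpa using hasDerivAt_pow (k + 1) x
  have hv (x : ℝ) : HasDerivAt (fun x => exp (-x ^ 2 / 2)) (-x * exp (-x ^ 2 / 2)) x := by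
    have : HasDerivAt (fun x : ℝ => -x ^ 2 / 2) (-x) x := by
      simpa [neg_div] using ((hasDerivAt_pow 2 x).div_const 2).fun_neg
    simpa [mul_comm] using this.exp
  have parts := integral_mul_deriv_eq_deriv_mul_of_integrable (fun x _ => hu x) (fun x _ => hv x)
    ((integrable_pow_mul_exp_neg_sq_div_two (k + 2)).neg.congr (ae_of_all _ fun x => by
      simp only [Pi.mul_apply, Pi.neg_apply]; ring))
    (((integrable_pow_mul_exp_neg_sq_div_two k).const_mul (k + 1)).congr
      (ae_of_all _ fun x => by simp only [Pi.mul_apply]; ring))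
    (integrable_pow_mul_exp_neg_sq_div_two (k + 1))
  calc ∫ x : ℝ, x ^ (k + 2) * exp (-x ^ 2 / 2)
      = -∫ x : ℝ, x ^ (k + 1) * (-x * exp (-x ^ 2 / 2)) := by
        rw [← integral_neg]; congr 1; ext x; ring
    _ = ∫ x : ℝ, (k + 1) * (x ^ k * exp (-x ^ 2 / 2)) := by
        rw [parts, neg_neg]; congr 1; ext x; ring
    _ = _ := integral_const_mul _ _

lemma integrable_pow_gaussianReal (μ : ℝ) (v : ℝ≥0) (k : ℕ) :
    Integrable (fun x => x ^ k) (gaussianReal μ v) :=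
  integrable_pow_of_mem_interior_integrableExpSet
    (by simp [integrableExpSet_fun_id_gaussianReal]) k

lemma integral_gaussianReal_zero_one_eq_integral_mul_exp (f : ℝ → ℝ) :
    ∫ x, f x ∂gaussianReal 0 1 = (√(2 * π))⁻¹ * ∫ x, f x * exp (-x ^ 2 / 2) := by
  rw [integral_gaussianReal_eq_integral_smul one_ne_zero, ← integral_const_mul]
  congr 1; ext x
  simp only [gaussianPDFReal_def, NNReal.coe_one, mul_one, sub_zero, neg_div, smul_eq_mul]
  ring

lemma integral_pow_add_two_gaussianReal (k : ℕ) :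
    ∫ x, x ^ (k + 2) ∂gaussianReal 0 1 = (k + 1) * ∫ x, x ^ k ∂gaussianReal 0 1 := by
  simp only [integral_gaussianReal_zero_one_eq_integral_mul_exp,
    integral_pow_add_two_mul_exp_neg_sq_div_two]
  ring

-- At `k = 0` the truncated `k - 1` is `0`, and `0‼ = 1` is the right value.
open scoped Nat in
lemma integral_pow_gaussianReal_zero_one (k : ℕ) :
    ∫ x, x ^ k ∂gaussianReal 0 1 = if Even k then ((k - 1)‼ : ℝ) else 0 := by
  induction k using Nat.twoStepInduction with
  | zero => simp
  | one => simp
  | more k ih _ =>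
    rw [integral_pow_add_two_gaussianReal, ih]
    simp only [Nat.even_add, even_two, iff_true, show k + 2 - 1 = k + 1 by omega,
      Nat.doubleFactorial_add_one]
    split_ifs <;> push_cast <;> ring

lemma integral_pow_gaussianReal_zero (v : ℝ≥0) (k : ℕ) :
    ∫ x, x ^ k ∂gaussianReal 0 v = √v ^ k * ∫ x, x ^ k ∂gaussianReal 0 1 := by
  have hscale : gaussianReal 0 v = (gaussianReal 0 1).map (√v * ·) := by
    rw [gaussianReal_map_const_mul, mul_zero, mul_one]
    congr
    ext
    simp
  rw [hscale, integral_map (by fun_prop) (by fun_prop), ← integral_const_mul]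
  simp_rw [mul_pow]

lemma add_pow_mul_pow_eq_sum (c t w : ℝ) (m q : ℕ) :
    (c * t + w) ^ m * t ^ q
      = ∑ k ∈ range (m + 1), c ^ k * m.choose k * (t ^ (k + q) * w ^ (m - k)) := by
  rw [add_pow, sum_mul]
  exact sum_congr rfl fun k _ => by ring

section Product

variable {μ ν : Measure ℝ}
  (hμ : ∀ k : ℕ, Integrable (fun t => t ^ k) μ) (hν : ∀ k : ℕ, Integrable (fun w => w ^ k) ν)
include hμ hν

lemma integrable_add_pow_mul_pow_prod (c : ℝ) (m q : ℕ) :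
    Integrable (fun p : ℝ × ℝ => (c * p.1 + p.2) ^ m * p.1 ^ q) (μ.prod ν) := by
  simp_rw [add_pow_mul_pow_eq_sum]
  exact integrable_finsetSum _ fun k _ => ((hμ _).mul_prod (hν _)).const_mul _

lemma integral_add_pow_mul_pow_prod [SFinite μ] [SFinite ν] (c : ℝ) (m q : ℕ) :
    ∫ p, (c * p.1 + p.2) ^ m * p.1 ^ q ∂(μ.prod ν)
      = ∑ k ∈ range (m + 1),
          c ^ k * m.choose k * ((∫ t, t ^ (k + q) ∂μ) * ∫ w, w ^ (m - k) ∂ν) := by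
  simp_rw [add_pow_mul_pow_eq_sum]
  rw [integral_finsetSum _ fun k _ => ((hμ _).mul_prod (hν _)).const_mul _]
  refine sum_congr rfl fun k _ => ?_
  rw [integral_const_mul, integral_prod_mul (fun t => t ^ (k + q)) (fun w => w ^ (m - k))]

end Product

section GaussianVector

variable {ι : Type*} [Fintype ι]

lemma map_pi_gaussianReal_sum_mul (s : Finset ι) (c : ι → ℝ) :
    (Measure.pi fun _ : ι => gaussianReal 0 1).map (fun a => ∑ i ∈ s, a i * c i)
      = gaussianReal 0 (∑ i ∈ s, c i ^ 2).toNNReal := by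
  classical
  set w : EuclideanSpace ℝ ι := WithLp.toLp 2 fun i => if i ∈ s then c i else 0
  have hL : (fun a : ι → ℝ => ∑ i ∈ s, a i * c i) = innerSL ℝ w ∘ WithLp.toLp 2 := by
    ext a
    simp [w, PiLp.inner_apply, sum_ite_mem, mul_comm]
  rw [hL, ← Measure.map_map (by fun_prop) (by fun_prop), map_pi_eq_stdGaussian,
    IsGaussian.map_eq_gaussianReal, integral_strongDual_stdGaussian, variance_dual_stdGaussian,
    innerSL_apply_norm, EuclideanSpace.real_norm_sq_eq]
  simp [w, sum_ite_mem]

lemma map_pi_eval_prod_sum_mul (μ : ι → Measure ℝ) [∀ i, IsProbabilityMeasure (μ i)]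
    {j : ι} {s : Finset ι} (hj : j ∉ s) (c : ι → ℝ) :
    (Measure.pi μ).map (fun a => (a j, ∑ i ∈ s, a i * c i))
      = (μ j).prod ((Measure.pi μ).map fun a => ∑ i ∈ s, a i * c i) := by
  have hindep := (iIndepFun_pi (μ := μ) (X := fun (_ : ι) (x : ℝ) => x)
    fun _ => aemeasurable_id).indepFun_finset {j} s (disjoint_singleton_left.2 hj)
      fun i => measurable_pi_apply i
  have hcomp := hindep.comp
    (show Measurable fun y : ({j} : Finset ι) → ℝ => y ⟨j, mem_singleton_self j⟩ from
      measurable_pi_apply _)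
    (show Measurable fun y : s → ℝ => ∑ i : s, y i * c i by fun_prop)
  rw [(indepFun_iff_map_prod_eq_prod_map_map (measurable_pi_apply j).aemeasurable
    (by fun_prop : Measurable fun a : ι → ℝ => ∑ i ∈ s, a i * c i).aemeasurable).1 ?_,
    (measurePreserving_eval μ j).map_eq]
  convert hcomp using 1
  · rfl
  · funext a
    exact (sum_coe_sort s fun i => a i * c i).symm

variable [DecidableEq ι] (x : ι → ℝ) (j : ι)

lemma map_pi_gaussianReal_eval_prod_sum_erase :
    (Measure.pi fun _ : ι => gaussianReal 0 1).map
        (fun a => (a j, ∑ i ∈ univ.erase j, a i * x i))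
      = (gaussianReal 0 1).prod (gaussianReal 0 (∑ i ∈ univ.erase j, x i ^ 2).toNNReal) := by
  rw [map_pi_eval_prod_sum_mul _ (notMem_erase j univ), map_pi_gaussianReal_sum_mul]

lemma sum_mul_eq_mul_eval_add_sum_erase (a : ι → ℝ) :
    ∑ i, a i * x i = x j * a j + ∑ i ∈ univ.erase j, a i * x i := by
  rw [← add_sum_erase univ (fun i => a i * x i) (mem_univ j), mul_comm (x j)]

lemma integrable_sum_mul_pow_mul_eval_pow (m q : ℕ) :
    Integrable (fun a => (∑ i, a i * x i) ^ m * a j ^ q)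
      (Measure.pi fun _ : ι => gaussianReal 0 1) := by
  have h := integrable_add_pow_mul_pow_prod (integrable_pow_gaussianReal 0 1)
    (integrable_pow_gaussianReal 0 (∑ i ∈ univ.erase j, x i ^ 2).toNNReal) (x j) m q
  rw [← map_pi_gaussianReal_eval_prod_sum_erase,
    integrable_map_measure (by fun_prop) (by fun_prop)] at h
  simpa only [Function.comp_def, sum_mul_eq_mul_eval_add_sum_erase x j] using h

lemma integral_sum_mul_pow_mul_eval_pow (m q : ℕ) :
    ∫ a, (∑ i, a i * x i) ^ m * a j ^ q ∂(Measure.pi fun _ : ι => gaussianReal 0 1)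
      = ∑ k ∈ range (m + 1), x j ^ k * m.choose k * ((∫ t, t ^ (k + q) ∂gaussianReal 0 1)
          * ∫ w, w ^ (m - k) ∂gaussianReal 0 (∑ i ∈ univ.erase j, x i ^ 2).toNNReal) := by
  have h := integral_map (μ := Measure.pi fun _ : ι => gaussianReal 0 1)
    (φ := fun a => (a j, ∑ i ∈ univ.erase j, a i * x i))
    (f := fun p : ℝ × ℝ => (x j * p.1 + p.2) ^ m * p.1 ^ q) (by fun_prop) (by fun_prop)
  rw [map_pi_gaussianReal_eval_prod_sum_erase, integral_add_pow_mul_pow_prod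
    (integrable_pow_gaussianReal 0 1) (integrable_pow_gaussianReal 0 _)] at h
  simp_rw [sum_mul_eq_mul_eval_add_sum_erase x j]
  exact h.symm

lemma integral_sum_mul_sq_mul_eval_sq :
    ∫ a, (∑ i, a i * x i) ^ 2 * a j ^ 2 ∂(Measure.pi fun _ : ι => gaussianReal 0 1)
      = ∑ i, x i ^ 2 + 2 * x j ^ 2 := by
  have hv : 0 ≤ ∑ i ∈ univ.erase j, x i ^ 2 := sum_nonneg fun i _ => sq_nonneg (x i)
  rw [integral_sum_mul_pow_mul_eval_pow, ← add_sum_erase univ (fun i => x i ^ 2) (mem_univ j)]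
  generalize ∑ i ∈ univ.erase j, x i ^ 2 = v at hv ⊢
  simp only [sum_range_succ, sum_range_zero, integral_pow_gaussianReal_zero v.toNNReal,
    integral_pow_gaussianReal_zero_one, Real.coe_toNNReal _ hv]
  norm_num [Nat.doubleFactorial, sq_sqrt hv]
  ring

lemma integral_sum_mul_pow_four_mul_eval_pow_four :
    ∫ a, (∑ i, a i * x i) ^ 4 * a j ^ 4 ∂(Measure.pi fun _ : ι => gaussianReal 0 1)
      = 24 * x j ^ 4 + 72 * (∑ i, x i ^ 2) * x j ^ 2 + 9 * (∑ i, x i ^ 2) ^ 2 := by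
  have hv : 0 ≤ ∑ i ∈ univ.erase j, x i ^ 2 := sum_nonneg fun i _ => sq_nonneg (x i)
  rw [integral_sum_mul_pow_mul_eval_pow, ← add_sum_erase univ (fun i => x i ^ 2) (mem_univ j)]
  generalize ∑ i ∈ univ.erase j, x i ^ 2 = v at hv ⊢
  simp only [sum_range_succ, sum_range_zero, integral_pow_gaussianReal_zero v.toNNReal,
    integral_pow_gaussianReal_zero_one, Real.coe_toNNReal _ hv]
  have h4 : √v ^ 4 = v ^ 2 := by rw [show 4 = 2 * 2 from rfl, pow_mul, sq_sqrt hv]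
  norm_num [Nat.doubleFactorial, Nat.choose, sq_sqrt hv]
  linear_combination 9 * h4

end GaussianVector

end ProbabilityTheory

theorem stmt_3_general (n : ℕ) (x : Fin n → ℝ) (j : Fin n)
    (X : (Fin n → ℝ) → ℝ)
    (hX : ∀ a, X a = (∑ i, (x i) ^ 2) + 2 * (x j) ^ 2 - (∑ i, a i * x i) ^ 2 * (a j) ^ 2) :
    (∀ a, X a ≤ (∑ i, (x i) ^ 2) + 2 * (x j) ^ 2) ∧
    ((∑ i, (x i) ^ 2) + 2 * (x j) ^ 2 ≤ 3 * ∑ i, (x i) ^ 2) ∧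
    (∫ a, X a ∂(stdGaussianVec n) = 0) ∧
    (∫ a, (X a) ^ 2 ∂(stdGaussianVec n)
        = 20 * (x j) ^ 4 + 68 * (∑ i, (x i) ^ 2) * (x j) ^ 2 + 8 * (∑ i, (x i) ^ 2) ^ 2) ∧
    (∫ a, (X a) ^ 2 ∂(stdGaussianVec n) ≤ 96 * (∑ i, (x i) ^ 2) ^ 2) := by
  unfold stdGaussianVec
  have hxj : x j ^ 2 ≤ ∑ i, x i ^ 2 := single_le_sum (fun i _ => sq_nonneg (x i)) (mem_univ j)
  have hY := integrable_sum_mul_pow_mul_eval_pow x j 2 2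
  have hmean : ∫ a, X a ∂(Measure.pi fun _ => gaussianReal 0 1) = 0 := by
    simp_rw [hX]
    rw [integral_sub (integrable_const _) hY, integral_const, integral_sum_mul_sq_mul_eval_sq]
    simp
  have hsq : ∫ a, X a ^ 2 ∂(Measure.pi fun _ => gaussianReal 0 1)
      = 20 * x j ^ 4 + 68 * (∑ i, x i ^ 2) * x j ^ 2 + 8 * (∑ i, x i ^ 2) ^ 2 := by
    have hX2 (a : Fin n → ℝ) : X a ^ 2 = (∑ i, x i ^ 2 + 2 * x j ^ 2) ^ 2
        - 2 * (∑ i, x i ^ 2 + 2 * x j ^ 2) * ((∑ i, a i * x i) ^ 2 * a j ^ 2)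
        + (∑ i, a i * x i) ^ 4 * a j ^ 4 := by
      rw [hX]; ring
    have hlin : Integrable (fun a : Fin n → ℝ => (∑ i, x i ^ 2 + 2 * x j ^ 2) ^ 2
        - 2 * (∑ i, x i ^ 2 + 2 * x j ^ 2) * ((∑ i, a i * x i) ^ 2 * a j ^ 2))
        (Measure.pi fun _ => gaussianReal 0 1) :=
      (integrable_const _).sub (hY.const_mul _)
    simp_rw [hX2]
    rw [integral_add hlin (integrable_sum_mul_pow_mul_eval_pow x j 4 4),
      integral_sub (integrable_const _) (hY.const_mul _), integral_const, integral_const_mul,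
      integral_sum_mul_sq_mul_eval_sq, integral_sum_mul_pow_four_mul_eval_pow_four]
    simp only [probReal_univ, smul_eq_mul, one_mul]
    ring
  refine ⟨fun a => ?_, by linarith, hmean, hsq, ?_⟩
  · rw [hX a]
    exact sub_le_self _ (by positivity)
  · rw [hsq]
    nlinarith [mul_le_mul_of_nonneg_left hxj (sq_nonneg (x j)), sq_nonneg (x j)]

/-- For the random variable `X = ‖x‖₂² + 2 x_j² − ⟨a,x⟩² a_j²` with `a` a standard Gaussian
vector: (i) `X ≤ ‖x‖₂² + 2 x_j² ≤ 3‖x‖₂²`; (ii) `E[X] = 0`;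
(iii) `E[X²] = 20 x_j⁴ + 68 ‖x‖₂² x_j² + 8 ‖x‖₂⁴ ≤ 96 ‖x‖₂⁴`. -/
theorem stmt_3 (n : ℕ) (hn : 1 ≤ n) (x : Fin n → ℝ) (j : Fin n)
    (X : (Fin n → ℝ) → ℝ)
    (hX : ∀ a, X a = (∑ i, (x i) ^ 2) + 2 * (x j) ^ 2 - (∑ i, a i * x i) ^ 2 * (a j) ^ 2) :
    (∀ a, X a ≤ (∑ i, (x i) ^ 2) + 2 * (x j) ^ 2) ∧
    ((∑ i, (x i) ^ 2) + 2 * (x j) ^ 2 ≤ 3 * ∑ i, (x i) ^ 2) ∧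
    (∫ a, X a ∂(stdGaussianVec n) = 0) ∧
    (∫ a, (X a) ^ 2 ∂(stdGaussianVec n)
        = 20 * (x j) ^ 4 + 68 * (∑ i, (x i) ^ 2) * (x j) ^ 2 + 8 * (∑ i, (x i) ^ 2) ^ 2) ∧
    (∫ a, (X a) ^ 2 ∂(stdGaussianVec n) ≤ 96 * (∑ i, (x i) ^ 2) ^ 2) :=
  stmt_3_general n x j X hX
end

section
/- Let α > 1 be a real number, C > 0, Θ > 0, and let j′ and s be positive integers with j′ ≤ s and C ≤ Θ · (j′)^α. Then j′ · Θ + Σ_{j = j′+1}^{s} C / j^α ≤ (α/(α−1)) · j′ · Θ. -/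
/-- Key deterministic power-law estimate: if `α > 1`, `C, Θ > 0`, `1 ≤ j′ ≤ s` and
`C ≤ Θ (j′)^α`, then `j′ Θ + Σ_{j=j′+1}^{s} C/j^α ≤ (α/(α−1)) j′ Θ`. -/
theorem stmt_12 (α C Θ : ℝ) (hα : 1 < α) (hC : 0 < C) (hΘ : 0 < Θ)
    (j' s : ℕ) (hj' : 0 < j') (hjs : j' ≤ s)
    (hCT : C ≤ Θ * (j' : ℝ) ^ α) :
    (j' : ℝ) * Θ + ∑ j ∈ Finset.Icc (j' + 1) s, C / (j : ℝ) ^ α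
      ≤ (α / (α - 1)) * (j' : ℝ) * Θ := by
  have hα1 : (0:ℝ) < α - 1 := by linarith
  have hj'pos : (0:ℝ) < (j' : ℝ) := by exact_mod_cast hj'
  have hj'1 : (1:ℝ) ≤ (j' : ℝ) := by exact_mod_cast hj'
  set f : ℝ → ℝ := fun x => C * x ^ (-α) with hf
  have hanti : AntitoneOn f (Set.Icc (j' : ℝ) (s : ℝ)) := by
    intro x hx y hy hxy
    have hx0 : 0 < x := lt_of_lt_of_le hj'pos hx.1
    exact mul_le_mul_of_nonneg_left
      (Real.rpow_le_rpow_of_nonpos hx0 hxy (by linarith)) hC.le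
  have hsum : ∑ j ∈ Finset.Icc (j' + 1) s, C / (j : ℝ) ^ α
      = ∑ i ∈ Finset.Ico j' s, f ((i + 1 : ℕ) : ℝ) := by
    rw [show Finset.Icc (j' + 1) s = Finset.Ico (j' + 1) (s + 1) by
      rw [Finset.Ico_add_one_right_eq_Icc]]
    rw [← Finset.sum_Ico_add' (fun j : ℕ => C / (j : ℝ) ^ α) j' s 1]
    refine Finset.sum_congr rfl fun i hi => ?_
    have hipos : (0:ℝ) < ((i + 1 : ℕ) : ℝ) := by positivity
    rw [hf]
    simp only [Real.rpow_neg hipos.le, div_eq_mul_inv]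
  have hint : ∑ i ∈ Finset.Ico j' s, f ((i + 1 : ℕ) : ℝ)
      ≤ ∫ x in (j' : ℝ)..(s : ℝ), f x :=
    AntitoneOn.sum_le_integral_Ico hjs hanti
  have hival : (∫ x in (j' : ℝ)..(s : ℝ), f x)
      = C * (((s : ℝ) ^ (-α + 1) - (j' : ℝ) ^ (-α + 1)) / (-α + 1)) := by
    rw [hf, intervalIntegral.integral_const_mul, integral_rpow]
    right
    constructor
    · intro h; linarith
    · intro h
      rw [Set.mem_uIcc] at h
      rcases h with h | h
      · linarith [h.1, hj'pos]
      · have : (j' : ℝ) ≤ (s : ℝ) := by exact_mod_cast hjs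
        linarith [h.1]
  have hsle : (0:ℝ) ≤ (s : ℝ) ^ (-α + 1) := Real.rpow_nonneg (Nat.cast_nonneg s) _
  have hibound : (∫ x in (j' : ℝ)..(s : ℝ), f x) ≤ C * (j' : ℝ) ^ (-α + 1) / (α - 1) := by
    rw [hival]
    rw [show ((s : ℝ) ^ (-α + 1) - (j' : ℝ) ^ (-α + 1)) / (-α + 1)
        = ((j' : ℝ) ^ (-α + 1) - (s : ℝ) ^ (-α + 1)) / (α - 1) by
      rw [div_eq_div_iff (by linarith) (by linarith)]; ring]
    rw [mul_div_assoc]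
    gcongr
    linarith [Real.rpow_nonneg (le_of_lt hj'pos) (-α + 1)]
  have hCb : C * (j' : ℝ) ^ (-α + 1) ≤ Θ * (j' : ℝ) := by
    calc C * (j' : ℝ) ^ (-α + 1) ≤ Θ * (j' : ℝ) ^ α * (j' : ℝ) ^ (-α + 1) := by
          gcongr
      _ = Θ * (j' : ℝ) := by
          rw [mul_assoc, ← Real.rpow_add hj'pos]
          norm_num
  have key : ∑ j ∈ Finset.Icc (j' + 1) s, C / (j : ℝ) ^ α ≤ Θ * (j' : ℝ) / (α - 1) := by
    rw [hsum]
    refine hint.trans (hibound.trans ?_)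
    gcongr
  have : (α / (α - 1)) * (j' : ℝ) * Θ = (j' : ℝ) * Θ + Θ * (j' : ℝ) / (α - 1) := by
    field_simp
    ring
  rw [this]
  linarith
end
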